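/- Let G be a finite simple graph on n ≥ 1 vertices with at least one edge that admits a Hoffman colouring, i.e. χ(G) = 1 − λ₁(G)/λₙ(G). Then for every integer d ≥ 0, the strong product G ⊠ K_{d+1} admits a d-improper Hoffman colouring; that is, χ^d(G ⊠ K_{d+1}) = (Λ₁ − Λ_N)/(d − Λ_N), where Λ₁ and Λ_N are the largest and smallest adjacency eigenvalues of G ⊠ K_{d+1}. Moreover χ^d(G ⊠ K_{d+1}) = χ(G). -/

import Mathlib

open SimpleGraph Finset Matrix

namespace ImproperPaper

variable {V W : Type*}

/-- The strong product of two simple graphs. -/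
def strongProd (G : SimpleGraph V) (H : SimpleGraph W) : SimpleGraph (V × W) where
  Adj p q := (p.1 = q.1 ∧ H.Adj p.2 q.2) ∨ (G.Adj p.1 q.1 ∧ p.2 = q.2) ∨
    (G.Adj p.1 q.1 ∧ H.Adj p.2 q.2)
  symm := by
    constructor
    rintro ⟨a, b⟩ ⟨x, y⟩ (⟨h1, h2⟩ | ⟨h1, h2⟩ | ⟨h1, h2⟩)
    · exact Or.inl ⟨h1.symm, h2.symm⟩
    · exact Or.inr (Or.inl ⟨h1.symm, h2.symm⟩)
    · exact Or.inr (Or.inr ⟨h1.symm, h2.symm⟩)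
  loopless := by
    constructor
    rintro ⟨a, b⟩ (⟨h1, h2⟩ | ⟨h1, h2⟩ | ⟨h1, h2⟩)
    · exact H.irrefl h2
    · exact G.irrefl h1
    · exact G.irrefl h1

/-- The lexicographical product of two simple graphs. -/
def lexProd (G : SimpleGraph V) (H : SimpleGraph W) : SimpleGraph (V × W) where
  Adj p q := G.Adj p.1 q.1 ∨ (p.1 = q.1 ∧ H.Adj p.2 q.2)
  symm := by
    constructor
    rintro ⟨a, b⟩ ⟨x, y⟩ (h | ⟨h1, h2⟩)
    · exact Or.inl h.symm
    · exact Or.inr ⟨h1.symm, h2.symm⟩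
  loopless := by
    constructor
    rintro ⟨a, b⟩ (h | ⟨h1, h2⟩)
    · exact G.irrefl h
    · exact H.irrefl h2

instance {G : SimpleGraph V} {H : SimpleGraph W} [DecidableEq V] [DecidableEq W]
    [DecidableRel G.Adj] [DecidableRel H.Adj] : DecidableRel (strongProd G H).Adj := fun p q =>
  show Decidable ((p.1 = q.1 ∧ H.Adj p.2 q.2) ∨ (G.Adj p.1 q.1 ∧ p.2 = q.2) ∨
    (G.Adj p.1 q.1 ∧ H.Adj p.2 q.2)) from inferInstance

/-- A colouring is `d`-improper if every colour class induces a subgraph of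
maximum degree at most `d`. -/
def IsImproperColoring (G : SimpleGraph V) (d : ℕ) {α : Type*} (c : V → α) : Prop :=
  ∀ v : V, ({w | G.Adj v w ∧ c w = c v} : Set V).ncard ≤ d

/-- The `d`-improper chromatic number. -/
noncomputable def improperChromaticNumber (G : SimpleGraph V) (d : ℕ) : ℕ :=
  sInf {n | ∃ c : V → Fin n, IsImproperColoring G d c}

/-- A colouring is `t`-clustered if every monochromatic connected component has at
most `t` vertices. -/
def IsClusteredColoring (G : SimpleGraph V) (t : ℕ) {α : Type*} (c : V → α) : Prop :=
  ∀ v : V,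
    ({w | Relation.ReflTransGen (fun a b => G.Adj a b ∧ c a = c b) v w} : Set V).ncard ≤ t

/-- The `t`-clustered chromatic number. -/
noncomputable def clusteredChromaticNumber (G : SimpleGraph V) (t : ℕ) : ℕ :=
  sInf {n | ∃ c : V → Fin n, IsClusteredColoring G t c}

/-- The chromatic number: least `n` admitting a proper colouring with `n` colours. -/
noncomputable def chromNum (G : SimpleGraph V) : ℕ :=
  sInf {n | ∃ c : V → Fin n, ∀ u v, G.Adj u v → c u ≠ c v}

/-- The `b`-fold `d`-improper chromatic number: least number of colours in an assignment
of `b` colours to each vertex such that, for every colour `x`, the set of vertices whose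
colour set contains `x` induces a subgraph of maximum degree at most `d`. -/
noncomputable def bFoldImproperChromaticNumber (G : SimpleGraph V) (b d : ℕ) : ℕ :=
  sInf {n | ∃ c : V → Finset (Fin n), (∀ v, (c v).card = b) ∧
    ∀ v : V, ∀ x ∈ c v, ({w | G.Adj v w ∧ x ∈ c w} : Set V).ncard ≤ d}

/-- The (proper) `b`-fold chromatic number. -/
noncomputable def bFoldChromaticNumber (G : SimpleGraph V) (b : ℕ) : ℕ :=
  bFoldImproperChromaticNumber G b 0

/-- The `b`-fold `t`-clustered chromatic number. -/
noncomputable def bFoldClusteredChromaticNumber (G : SimpleGraph V) (b t : ℕ) : ℕ :=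
  sInf {n | ∃ c : V → Finset (Fin n), (∀ v, (c v).card = b) ∧
    ∀ x : Fin n, ∀ v : V, x ∈ c v →
      ({w | Relation.ReflTransGen (fun a b' => G.Adj a b' ∧ x ∈ c a ∧ x ∈ c b') v w} :
        Set V).ncard ≤ t}

/-- The fractional chromatic number `χ_f(G) = inf { χ_b(G)/b : b ≥ 1 }`. -/
noncomputable def fracChromaticNumber (G : SimpleGraph V) : ℝ :=
  sInf {x : ℝ | ∃ b : ℕ, 0 < b ∧ x = (bFoldChromaticNumber G b : ℝ) / b}

/-- The fractional `d`-improper chromatic number. -/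
noncomputable def fracImproperChromaticNumber (G : SimpleGraph V) (d : ℕ) : ℝ :=
  sInf {x : ℝ | ∃ b : ℕ, 0 < b ∧ x = (bFoldImproperChromaticNumber G b d : ℝ) / b}

/-- The fractional `t`-clustered chromatic number. -/
noncomputable def fracClusteredChromaticNumber (G : SimpleGraph V) (t : ℕ) : ℝ :=
  sInf {x : ℝ | ∃ b : ℕ, 0 < b ∧ x = (bFoldClusteredChromaticNumber G b t : ℝ) / b}

/-- `lam` lists the eigenvalues of the Hermitian matrix `A` (with multiplicity) in
non-increasing order. -/
def IsEigList {n : ℕ} {A : Matrix (Fin n) (Fin n) ℝ} (hA : A.IsHermitian)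
    (lam : Fin n → ℝ) : Prop :=
  Antitone lam ∧ ∃ σ : Equiv.Perm (Fin n), lam = hA.eigenvalues ∘ σ

/-- The largest size of a vertex subset inducing a subgraph of maximum degree at most `d`. -/
noncomputable def maxImproperIndep (G : SimpleGraph V) (d : ℕ) : ℕ :=
  sSup {k | ∃ s : Set V, s.ncard = k ∧ ∀ v ∈ s, ({w | w ∈ s ∧ G.Adj v w} : Set V).ncard ≤ d}

end ImproperPaper

/-!
The adjacency matrix of `G ⊠ K_m` is `(A + I) ⊗ J - I`, so its quadratic form at `x` is the
quadratic form of `A + I` at the vector of fibre sums of `x`, minus `‖x‖²`. Cauchy–Schwarz on the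
fibres then shows that its extreme eigenvalues are `(λ + 1) m - 1` for the extreme eigenvalues `λ`
of `A`; this needs `λ₁ ≥ 0` and `λₙ ≤ -1`, the latter because `G` has an edge. For `m = d + 1` the
improper Hoffman ratio `(Λ₁ - Λₙ) / (d - Λₙ)` therefore equals `1 - λ₁ / λₙ = χ(G)`.

Giving every vertex of `G ⊠ K_{d+1}` the colour of its `G`-coordinate in a proper colouring of `G`
is `d`-improper, so `χ^d(G ⊠ K_{d+1}) ≤ χ(G)`. Conversely, any `d`-improper `k`-colouring satisfies
the improper Hoffman bound `Λ₁ - Λₙ ≤ k (d - Λₙ)`: test the Rayleigh quotient for `Λₙ` on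
`x - k xᵢ`, where `x` is a `Λ₁`-eigenvector and `xᵢ` its restriction to the `i`-th colour class,
and sum over `i`. On a colour class the quadratic form is at most `d ‖xᵢ‖²`, because the Laplacian
of the subgraph of monochromatic edges is positive semidefinite.
-/

open Matrix

namespace Matrix.IsHermitian

section Eigenvalues

variable {n : Type*} [Fintype n] [DecidableEq n] {M : Matrix n n ℝ}

lemma mem_range_eigenvalues_iff (hM : M.IsHermitian) {μ : ℝ} :
    μ ∈ Set.range hM.eigenvalues ↔ ∃ v ≠ 0, M *ᵥ v = μ • v := by
  rw [← hM.spectrum_real_eq_range_eigenvalues, ← spectrum_toLin',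
    ← Module.End.hasEigenvalue_iff_mem_spectrum]
  constructor
  · intro h
    obtain ⟨v, hv⟩ := h.exists_hasEigenvector
    exact ⟨v, hv.2, by simpa using hv.apply_eq_smul⟩
  · rintro ⟨v, hv0, hv⟩
    exact Module.End.hasEigenvalue_of_hasEigenvector
      (Module.End.hasEigenvector_iff.mpr ⟨by simpa using hv, hv0⟩)

lemma posSemidef_of_spectrum_nonneg (hM : M.IsHermitian) (h : ∀ μ ∈ spectrum ℝ M, 0 ≤ μ) :
    M.PosSemidef :=
  hM.posSemidef_iff_eigenvalues_nonneg.mpr fun i => h _ (hM.eigenvalues_mem_spectrum_real i)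

lemma dotProduct_mulVec_le (hM : M.IsHermitian) {t : ℝ} (ht : ∀ i, hM.eigenvalues i ≤ t)
    (x : n → ℝ) : x ⬝ᵥ M *ᵥ x ≤ t * (x ⬝ᵥ x) := by
  have hN : (algebraMap ℝ (Matrix n n ℝ) t - M).IsHermitian :=
    (IsSelfAdjoint.algebraMap _ (.all t)).sub hM
  have hpsd := hN.posSemidef_of_spectrum_nonneg fun μ hμ => by
    rw [← spectrum.singleton_sub_eq, hM.spectrum_real_eq_range_eigenvalues] at hμ
    obtain ⟨_, rfl, _, ⟨i, rfl⟩, rfl⟩ := hμ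
    simpa using ht i
  simpa [sub_mulVec, Algebra.algebraMap_eq_smul_one, smul_mulVec, dotProduct_sub]
    using hpsd.dotProduct_mulVec_nonneg x

lemma le_dotProduct_mulVec (hM : M.IsHermitian) {t : ℝ} (ht : ∀ i, t ≤ hM.eigenvalues i)
    (x : n → ℝ) : t * (x ⬝ᵥ x) ≤ x ⬝ᵥ M *ᵥ x := by
  have hN : (M - algebraMap ℝ (Matrix n n ℝ) t).IsHermitian :=
    hM.sub (IsSelfAdjoint.algebraMap _ (.all t))
  have hpsd := hN.posSemidef_of_spectrum_nonneg fun μ hμ => by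
    rw [← spectrum.sub_singleton_eq, hM.spectrum_real_eq_range_eigenvalues] at hμ
    obtain ⟨_, ⟨i, rfl⟩, _, rfl, rfl⟩ := hμ
    simpa using ht i
  simpa [sub_mulVec, Algebra.algebraMap_eq_smul_one, smul_mulVec, dotProduct_sub]
    using hpsd.dotProduct_mulVec_nonneg x

lemma exists_rayleigh_eq_eigenvalue (hM : M.IsHermitian) (i : n) :
    ∃ v, 0 < v ⬝ᵥ v ∧ v ⬝ᵥ M *ᵥ v = hM.eigenvalues i * (v ⬝ᵥ v) := by
  obtain ⟨v, hv0, hv⟩ := hM.mem_range_eigenvalues_iff.mp ⟨i, rfl⟩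
  exact ⟨v, by simpa using dotProduct_star_self_pos_iff.mpr hv0, by simp [hv]⟩

lemma isGreatest_range_eigenvalues_iff (hM : M.IsHermitian) {t : ℝ} :
    IsGreatest (Set.range hM.eigenvalues) t ↔
      (∃ v ≠ 0, M *ᵥ v = t • v) ∧ ∀ x, x ⬝ᵥ M *ᵥ x ≤ t * (x ⬝ᵥ x) := by
  rw [IsGreatest, hM.mem_range_eigenvalues_iff, mem_upperBounds, Set.forall_mem_range]
  refine and_congr_right fun _ => ⟨hM.dotProduct_mulVec_le, fun ht i => ?_⟩
  obtain ⟨v, hpos, hv⟩ := hM.exists_rayleigh_eq_eigenvalue i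
  exact le_of_mul_le_mul_right (hv ▸ ht v) hpos

lemma isLeast_range_eigenvalues_iff (hM : M.IsHermitian) {t : ℝ} :
    IsLeast (Set.range hM.eigenvalues) t ↔
      (∃ v ≠ 0, M *ᵥ v = t • v) ∧ ∀ x, t * (x ⬝ᵥ x) ≤ x ⬝ᵥ M *ᵥ x := by
  rw [IsLeast, hM.mem_range_eigenvalues_iff, mem_lowerBounds, Set.forall_mem_range]
  refine and_congr_right fun _ => ⟨hM.le_dotProduct_mulVec, fun ht i => ?_⟩
  obtain ⟨v, hpos, hv⟩ := hM.exists_rayleigh_eq_eigenvalue i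
  exact le_of_mul_le_mul_right (hv ▸ ht v) hpos

end Eigenvalues

lemma hoffman_bound_of_orthogonal_sum {n ι : Type*} [Fintype n] [Fintype ι]
    {M : Matrix n n ℝ} (hM : M.IsHermitian) {Λ₁ Λₙ d : ℝ} {x : n → ℝ} (hx0 : x ≠ 0)
    (hx : M *ᵥ x = Λ₁ • x) (hmin : ∀ z, Λₙ * (z ⬝ᵥ z) ≤ z ⬝ᵥ M *ᵥ z) (y : ι → n → ℝ)
    (hsum : ∑ i, y i = x) (horth : Pairwise fun i j => y i ⬝ᵥ y j = 0)
    (hy : ∀ i, y i ⬝ᵥ M *ᵥ y i ≤ d * (y i ⬝ᵥ y i)) :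
    Λ₁ - Λₙ ≤ Fintype.card ι * (d - Λₙ) := by
  set k : ℝ := (Fintype.card ι : ℝ)
  have hX : 0 < x ⬝ᵥ x := by simpa using dotProduct_star_self_pos_iff.mpr hx0
  have hk : 0 < k := by
    rcases isEmpty_or_nonempty ι with hι | hι
    · exact absurd (by simp [← hsum]) hx0
    · simpa [k] using Fintype.card_pos
  have hyx : ∀ i, y i ⬝ᵥ x = y i ⬝ᵥ y i := fun i => by
    rw [← hsum, dotProduct_sum, Finset.sum_eq_single i (fun j _ hji => horth hji.symm)
      (by simp)]
  have hnorm : ∑ i, y i ⬝ᵥ y i = x ⬝ᵥ x := by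
    simp_rw [← hyx, ← sum_dotProduct, hsum]
  have hxMy : ∀ i, x ⬝ᵥ M *ᵥ y i = Λ₁ * (y i ⬝ᵥ y i) := fun i => by
    rw [dotProduct_mulVec, ← mulVec_transpose, ← conjTranspose_eq_transpose_of_trivial, hM.eq,
      hx, smul_dotProduct, dotProduct_comm, hyx, smul_eq_mul]
  have hshift : ∀ i, Λₙ * (x ⬝ᵥ x) + (k ^ 2 - 2 * k) * Λₙ * (y i ⬝ᵥ y i) ≤
      Λ₁ * (x ⬝ᵥ x) - 2 * k * Λ₁ * (y i ⬝ᵥ y i) + k ^ 2 * (y i ⬝ᵥ M *ᵥ y i) := fun i => by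
    have h := hmin (x - k • y i)
    simp only [mulVec_sub, mulVec_smul, dotProduct_sub, sub_dotProduct, dotProduct_smul,
      smul_dotProduct, smul_eq_mul, hxMy, hx, hyx] at h
    rw [dotProduct_comm x (y i), hyx] at h
    linarith
  have hquad : ∑ i, y i ⬝ᵥ M *ᵥ y i ≤ d * (x ⬝ᵥ x) := by
    rw [← hnorm, Finset.mul_sum]
    exact Finset.sum_le_sum fun i _ => hy i
  have htotal := Finset.sum_le_sum fun i (_ : i ∈ Finset.univ) => hshift i
  simp only [Finset.sum_add_distrib, Finset.sum_sub_distrib, Finset.sum_const, Finset.card_univ,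
    ← Finset.mul_sum, hnorm, nsmul_eq_mul] at htotal
  refine le_of_mul_le_mul_left ?_ (mul_pos hk hX)
  nlinarith [mul_le_mul_of_nonneg_left hquad (sq_nonneg k)]

end Matrix.IsHermitian

lemma single_sub_single_dotProduct_self {V : Type*} [Fintype V] [DecidableEq V] {u v : V}
    (h : u ≠ v) :
    (Pi.single u 1 - Pi.single v 1 : V → ℝ) ⬝ᵥ (Pi.single u 1 - Pi.single v 1) = 2 := by
  simp [dotProduct_sub, h, h.symm]
  norm_num

namespace SimpleGraph

variable {V : Type*} [Fintype V] [DecidableEq V] {G : SimpleGraph V} [DecidableRel G.Adj]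

lemma dotProduct_adjMatrix_mulVec_le_of_degree_le {d : ℕ} (hd : ∀ v, G.degree v ≤ d)
    (x : V → ℝ) : x ⬝ᵥ G.adjMatrix ℝ *ᵥ x ≤ d * (x ⬝ᵥ x) := by
  have hlap := (G.posSemidef_lapMatrix ℝ).dotProduct_mulVec_nonneg x
  have hdeg : x ⬝ᵥ G.degMatrix ℝ *ᵥ x ≤ d * (x ⬝ᵥ x) := by
    simp only [dotProduct, degMatrix_mulVec_apply, Finset.mul_sum]
    refine Finset.sum_le_sum fun v _ => ?_
    have : (G.degree v : ℝ) ≤ d := by exact_mod_cast hd v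
    nlinarith [mul_self_nonneg (x v)]
  simp only [lapMatrix, sub_mulVec, dotProduct_sub, star_trivial] at hlap
  linarith

lemma single_dotProduct_adjMatrix_mulVec_single (u : V) :
    Pi.single u 1 ⬝ᵥ G.adjMatrix ℝ *ᵥ Pi.single u 1 = 0 := by
  simp [mulVec_single]

lemma dotProduct_adjMatrix_mulVec_single_sub_single {u v : V} (h : G.Adj u v) :
    (Pi.single u 1 - Pi.single v 1) ⬝ᵥ G.adjMatrix ℝ *ᵥ (Pi.single u 1 - Pi.single v 1) =
      -2 := by
  simp [mulVec_sub, dotProduct_sub, mulVec_single, h, h.symm]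
  norm_num

variable {hA : (G.adjMatrix ℝ).IsHermitian} {μ : ℝ}

lemma nonneg_of_isGreatest_range_eigenvalues (h : IsGreatest (Set.range hA.eigenvalues) μ) :
    0 ≤ μ := by
  obtain ⟨i, -⟩ := h.1
  simpa [single_dotProduct_adjMatrix_mulVec_single] using
    (hA.isGreatest_range_eigenvalues_iff.mp h).2 (Pi.single i 1)

lemma le_neg_one_of_isLeast_range_eigenvalues (h : IsLeast (Set.range hA.eigenvalues) μ)
    {u v : V} (huv : G.Adj u v) : μ ≤ -1 := by
  have := (hA.isLeast_range_eigenvalues_iff.mp h).2 (Pi.single u 1 - Pi.single v 1)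
  rw [dotProduct_adjMatrix_mulVec_single_sub_single huv,
    single_sub_single_dotProduct_self (G.ne_of_adj huv)] at this
  linarith

end SimpleGraph

namespace ImproperPaper

open SimpleGraph

section ChromaticNumbers

variable {V : Type*}

lemma exists_proper_coloring_chromNum [Finite V] (G : SimpleGraph V) :
    ∃ c : V → Fin (chromNum G), ∀ u v, G.Adj u v → c u ≠ c v :=
  Nat.sInf_mem (s := {k | ∃ c : V → Fin k, ∀ u v, G.Adj u v → c u ≠ c v})
    ⟨Nat.card V, Finite.equivFin V, fun _ _ h => (Finite.equivFin V).injective.ne (G.ne_of_adj h)⟩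

lemma improperChromaticNumber_le {G : SimpleGraph V} {d k : ℕ} {c : V → Fin k}
    (hc : IsImproperColoring G d c) : improperChromaticNumber G d ≤ k :=
  Nat.sInf_le ⟨c, hc⟩

lemma exists_isImproperColoring_improperChromaticNumber [Finite V] (G : SimpleGraph V) (d : ℕ) :
    ∃ c : V → Fin (improperChromaticNumber G d), IsImproperColoring G d c := by
  refine Nat.sInf_mem (s := {k | ∃ c : V → Fin k, IsImproperColoring G d c})
    ⟨Nat.card V, Finite.equivFin V, fun v => ?_⟩
  have hempty : {w | G.Adj v w ∧ Finite.equivFin V w = Finite.equivFin V v} = ∅ :=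
    Set.eq_empty_of_forall_notMem fun w hw =>
      G.ne_of_adj hw.1 ((Finite.equivFin V).injective hw.2).symm
  rw [hempty, Set.ncard_empty]
  exact Nat.zero_le d

end ChromaticNumbers

section ImproperHoffmanBound

variable {V α : Type*}

def monochromaticSubgraph (G : SimpleGraph V) (c : V → α) : SimpleGraph V where
  Adj p q := G.Adj p q ∧ c p = c q
  symm := ⟨fun _ _ h => ⟨h.1.symm, h.2.symm⟩⟩
  loopless := ⟨fun _ h => G.irrefl h.1⟩

@[simp]
lemma monochromaticSubgraph_adj {G : SimpleGraph V} {c : V → α} {p q : V} :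
    (monochromaticSubgraph G c).Adj p q ↔ G.Adj p q ∧ c p = c q :=
  Iff.rfl

variable [Fintype V] {G : SimpleGraph V} {d : ℕ} {c : V → α}

lemma IsImproperColoring.degree_monochromaticSubgraph_le (hc : IsImproperColoring G d c)
    [DecidableRel (monochromaticSubgraph G c).Adj] (v : V) :
    (monochromaticSubgraph G c).degree v ≤ d := by
  rw [← card_neighborSet_eq_degree, ← Nat.card_eq_fintype_card, Nat.card_coe_set_eq]
  convert hc v using 2
  exact Set.ext fun w => and_congr_right' eq_comm

variable [DecidableEq V] [DecidableRel G.Adj]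

lemma IsImproperColoring.dotProduct_adjMatrix_mulVec_le (hc : IsImproperColoring G d c) {i : α}
    {y : V → ℝ} (hy : ∀ p, c p ≠ i → y p = 0) : y ⬝ᵥ G.adjMatrix ℝ *ᵥ y ≤ d * (y ⬝ᵥ y) := by
  classical
  have hmono : y ⬝ᵥ G.adjMatrix ℝ *ᵥ y = y ⬝ᵥ (monochromaticSubgraph G c).adjMatrix ℝ *ᵥ y := by
    simp only [dotProduct, mulVec, Finset.mul_sum]
    refine Finset.sum_congr rfl fun p _ => Finset.sum_congr rfl fun q _ => ?_
    by_cases hp : c p = i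
    · by_cases hq : c q = i
      · simp [hp, hq]
      · simp [hy q hq]
    · simp [hy p hp]
  rw [hmono]
  exact dotProduct_adjMatrix_mulVec_le_of_degree_le hc.degree_monochromaticSubgraph_le y

variable {Λ₁ Λₙ : ℝ} {hB : (G.adjMatrix ℝ).IsHermitian}

theorem IsImproperColoring.hoffman_bound [Fintype α] (hc : IsImproperColoring G d c)
    (hΛ₁ : IsGreatest (Set.range hB.eigenvalues) Λ₁)
    (hΛₙ : IsLeast (Set.range hB.eigenvalues) Λₙ) :
    Λ₁ - Λₙ ≤ Fintype.card α * (d - Λₙ) := by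
  classical
  obtain ⟨⟨x, hx0, hx⟩, -⟩ := hB.isGreatest_range_eigenvalues_iff.mp hΛ₁
  refine hB.hoffman_bound_of_orthogonal_sum hx0 hx (hB.isLeast_range_eigenvalues_iff.mp hΛₙ).2
    (fun i p => if c p = i then x p else 0) ?_ ?_
    fun i => hc.dotProduct_adjMatrix_mulVec_le fun p hp => if_neg hp
  · ext p
    simp
  · intro i j hij
    refine Finset.sum_eq_zero fun p _ => ?_
    by_cases hp : c p = i
    · simp [hp, hij]
    · simp [hp]

theorem div_le_improperChromaticNumber (hΛ₁ : IsGreatest (Set.range hB.eigenvalues) Λ₁)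
    (hΛₙ : IsLeast (Set.range hB.eigenvalues) Λₙ) (hd : Λₙ < d) :
    (Λ₁ - Λₙ) / (d - Λₙ) ≤ improperChromaticNumber G d := by
  obtain ⟨c, hc⟩ := exists_isImproperColoring_improperChromaticNumber G d
  rw [div_le_iff₀ (sub_pos.mpr hd)]
  simpa using hc.hoffman_bound hΛ₁ hΛₙ

end ImproperHoffmanBound

section FiberSum

variable {V W : Type*}

lemma comp_fst_ne_zero [Nonempty W] {v : V → ℝ} (hv : v ≠ 0) : (v ∘ Prod.fst : V × W → ℝ) ≠ 0 :=
  fun h => hv (Prod.fst_surjective.injective_comp_right (h : v ∘ Prod.fst = (0 : V → ℝ) ∘ Prod.fst))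

variable [Fintype W]

def fiberSum (x : V × W → ℝ) (u : V) : ℝ := ∑ i, x (u, i)

lemma fiberSum_comp_fst (y : V → ℝ) :
    fiberSum (y ∘ Prod.fst : V × W → ℝ) = (Fintype.card W : ℝ) • y := by
  ext u
  simp [fiberSum]

variable [Fintype V]

lemma submatrix_fst_mulVec (N : Matrix V V ℝ) (x : V × W → ℝ) :
    (N.submatrix Prod.fst Prod.fst : Matrix (V × W) (V × W) ℝ) *ᵥ x =
      (N *ᵥ fiberSum x) ∘ Prod.fst := by
  ext p
  simp [mulVec, dotProduct, fiberSum, Fintype.sum_prod_type, Finset.mul_sum]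

lemma dotProduct_comp_fst (x : V × W → ℝ) (y : V → ℝ) :
    x ⬝ᵥ (y ∘ Prod.fst) = fiberSum x ⬝ᵥ y := by
  simp [dotProduct, fiberSum, Fintype.sum_prod_type, Finset.sum_mul]

lemma fiberSum_dotProduct_self_le (x : V × W → ℝ) :
    fiberSum x ⬝ᵥ fiberSum x ≤ Fintype.card W * (x ⬝ᵥ x) := by
  simp only [dotProduct, fiberSum, Fintype.sum_prod_type]
  rw [Finset.mul_sum]
  refine Finset.sum_le_sum fun u _ => ?_
  simpa [sq] using sq_sum_le_card_mul_sum_sq (s := Finset.univ) (f := fun i => x (u, i))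

end FiberSum

section StrongProdComplete

variable {V W : Type*} {G : SimpleGraph V}

lemma strongProd_top_adj {p q : V × W} :
    (strongProd G (⊤ : SimpleGraph W)).Adj p q ↔ p ≠ q ∧ (p.1 = q.1 ∨ G.Adj p.1 q.1) := by
  obtain ⟨a, i⟩ := p
  obtain ⟨b, j⟩ := q
  by_cases hab : a = b
  · subst hab; simp [strongProd]
  · by_cases hij : i = j <;> simp [strongProd, hab, hij]

lemma isImproperColoring_strongProd_top_comp_fst [Fintype W] {α : Type*} {c : V → α}
    (hc : ∀ u v, G.Adj u v → c u ≠ c v) :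
    IsImproperColoring (strongProd G (⊤ : SimpleGraph W)) (Fintype.card W - 1)
      (c ∘ Prod.fst) := by
  classical
  intro p
  calc _ ≤ ((Finset.univ.erase p.2).image (Prod.mk p.1) : Set (V × W)).ncard := by
        refine Set.ncard_le_ncard (fun w hw => ?_) (Finset.finite_toSet _)
        obtain ⟨hne, h1 | hadj⟩ := strongProd_top_adj.mp hw.1
        · simp only [Finset.coe_image, Finset.coe_erase, Finset.coe_univ, Set.mem_image]
          exact ⟨w.2, ⟨trivial, fun h => hne (Prod.ext h1 (Set.mem_singleton_iff.mp h).symm)⟩,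
            Prod.ext h1 rfl⟩
        · exact absurd hw.2.symm (hc _ _ hadj)
    _ ≤ Fintype.card W - 1 := by
        rw [Set.ncard_coe_finset]
        exact Finset.card_image_le.trans (by simp [Finset.card_erase_of_mem])

variable [DecidableEq V] [DecidableEq W] [DecidableRel G.Adj]

lemma adjMatrix_strongProd_top :
    (strongProd G (⊤ : SimpleGraph W)).adjMatrix ℝ =
      (G.adjMatrix ℝ + 1).submatrix Prod.fst Prod.fst - 1 := by
  ext ⟨a, i⟩ ⟨b, j⟩
  by_cases hab : a = b
  · subst hab; by_cases hij : i = j <;> simp [strongProd_top_adj, one_apply, hij]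
  · simp [strongProd_top_adj, one_apply, hab]

variable [Fintype V] [Fintype W]

lemma dotProduct_adjMatrix_strongProd_top_mulVec (x : V × W → ℝ) :
    x ⬝ᵥ (strongProd G (⊤ : SimpleGraph W)).adjMatrix ℝ *ᵥ x =
      fiberSum x ⬝ᵥ G.adjMatrix ℝ *ᵥ fiberSum x + fiberSum x ⬝ᵥ fiberSum x - x ⬝ᵥ x := by
  rw [adjMatrix_strongProd_top, sub_mulVec, one_mulVec, dotProduct_sub, submatrix_fst_mulVec,
    dotProduct_comp_fst, add_mulVec, one_mulVec, dotProduct_add]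

lemma adjMatrix_strongProd_top_mulVec_comp_fst {μ : ℝ} {v : V → ℝ}
    (hv : G.adjMatrix ℝ *ᵥ v = μ • v) :
    (strongProd G (⊤ : SimpleGraph W)).adjMatrix ℝ *ᵥ (v ∘ Prod.fst) =
      ((μ + 1) * Fintype.card W - 1) • (v ∘ Prod.fst) := by
  rw [adjMatrix_strongProd_top, sub_mulVec, one_mulVec, submatrix_fst_mulVec, fiberSum_comp_fst,
    mulVec_smul, add_mulVec, one_mulVec, hv]
  ext p
  simp only [Function.comp_apply, Pi.sub_apply, Pi.smul_apply, Pi.add_apply, smul_eq_mul]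
  ring

variable [Nonempty W] {hA : (G.adjMatrix ℝ).IsHermitian}
  (hB : ((strongProd G (⊤ : SimpleGraph W)).adjMatrix ℝ).IsHermitian) {μ : ℝ}

lemma isGreatest_eigenvalues_strongProd_top (hμ : IsGreatest (Set.range hA.eigenvalues) μ)
    (hμ1 : -1 ≤ μ) : IsGreatest (Set.range hB.eigenvalues) ((μ + 1) * Fintype.card W - 1) := by
  obtain ⟨⟨v, hv0, hv⟩, hray⟩ := hA.isGreatest_range_eigenvalues_iff.mp hμ
  refine hB.isGreatest_range_eigenvalues_iff.mpr
    ⟨⟨v ∘ Prod.fst, comp_fst_ne_zero hv0, adjMatrix_strongProd_top_mulVec_comp_fst hv⟩,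
      fun x => ?_⟩
  rw [dotProduct_adjMatrix_strongProd_top_mulVec]
  nlinarith [hray (fiberSum x),
    mul_le_mul_of_nonneg_left (fiberSum_dotProduct_self_le x) (neg_le_iff_add_nonneg.mp hμ1)]

lemma isLeast_eigenvalues_strongProd_top (hμ : IsLeast (Set.range hA.eigenvalues) μ)
    (hμ1 : μ ≤ -1) : IsLeast (Set.range hB.eigenvalues) ((μ + 1) * Fintype.card W - 1) := by
  obtain ⟨⟨v, hv0, hv⟩, hray⟩ := hA.isLeast_range_eigenvalues_iff.mp hμ
  refine hB.isLeast_range_eigenvalues_iff.mpr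
    ⟨⟨v ∘ Prod.fst, comp_fst_ne_zero hv0, adjMatrix_strongProd_top_mulVec_comp_fst hv⟩,
      fun x => ?_⟩
  rw [dotProduct_adjMatrix_strongProd_top_mulVec]
  nlinarith [hray (fiberSum x),
    mul_le_mul_of_nonpos_left (fiberSum_dotProduct_self_le x) (by linarith : μ + 1 ≤ 0)]

end StrongProdComplete

end ImproperPaper

open ImproperPaper in

theorem stmt_10_general {n : ℕ} (G : SimpleGraph (Fin n)) [DecidableRel G.Adj]
    (hedge : ∃ u v : Fin n, G.Adj u v) (d : ℕ)
    (hA : (G.adjMatrix ℝ).IsHermitian) (lam1 lamn : ℝ)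
    (hlam1 : IsGreatest (Set.range hA.eigenvalues) lam1)
    (hlamn : IsLeast (Set.range hA.eigenvalues) lamn)
    (hHoffman : (chromNum G : ℝ) = 1 - lam1 / lamn)
    (hB : (((strongProd G (⊤ : SimpleGraph (Fin (d + 1)))).adjMatrix ℝ)).IsHermitian)
    (Lam1 LamN : ℝ)
    (hLam1 : IsGreatest (Set.range hB.eigenvalues) Lam1)
    (hLamN : IsLeast (Set.range hB.eigenvalues) LamN) :
    (improperChromaticNumber (strongProd G (⊤ : SimpleGraph (Fin (d + 1)))) d : ℝ) =
        (Lam1 - LamN) / ((d : ℝ) - LamN) ∧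
      improperChromaticNumber (strongProd G (⊤ : SimpleGraph (Fin (d + 1)))) d =
        chromNum G := by
  obtain ⟨u, v, huv⟩ := hedge
  have hlamn1 : lamn ≤ -1 := SimpleGraph.le_neg_one_of_isLeast_range_eigenvalues hlamn huv
  have hLam1_eq : Lam1 = (lam1 + 1) * (d + 1) - 1 := hLam1.unique <| by
    simpa using isGreatest_eigenvalues_strongProd_top hB hlam1
      (by linarith [SimpleGraph.nonneg_of_isGreatest_range_eigenvalues hlam1])
  have hLamN_eq : LamN = (lamn + 1) * (d + 1) - 1 := hLamN.unique <| by
    simpa using isLeast_eigenvalues_strongProd_top hB hlamn hlamn1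
  have hLamN_lt : LamN < d := by nlinarith
  have hratio : (Lam1 - LamN) / (d - LamN) = chromNum G := by
    have hlamn0 : lamn ≠ 0 := (show lamn < 0 by linarith).ne
    rw [hHoffman, div_eq_iff (sub_pos.mpr hLamN_lt).ne', hLam1_eq, hLamN_eq]
    field_simp
    ring
  have hupper : improperChromaticNumber (strongProd G (⊤ : SimpleGraph (Fin (d + 1)))) d ≤
      chromNum G := by
    obtain ⟨c, hc⟩ := exists_proper_coloring_chromNum G
    simpa using improperChromaticNumber_le (isImproperColoring_strongProd_top_comp_fst
      (W := Fin (d + 1)) hc)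
  have hlower := hratio ▸ div_le_improperChromaticNumber hLam1 hLamN hLamN_lt
  have heq := le_antisymm hupper (by exact_mod_cast hlower)
  exact ⟨by rw [hratio, heq], heq⟩

open ImproperPaper in
theorem stmt_10 {n : ℕ} (hn : 1 ≤ n) (G : SimpleGraph (Fin n)) [DecidableRel G.Adj]
    (hedge : ∃ u v : Fin n, G.Adj u v) (d : ℕ)
    (hA : (G.adjMatrix ℝ).IsHermitian) (lam1 lamn : ℝ)
    (hlam1 : IsGreatest (Set.range hA.eigenvalues) lam1)
    (hlamn : IsLeast (Set.range hA.eigenvalues) lamn)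
    (hHoffman : (chromNum G : ℝ) = 1 - lam1 / lamn)
    (hB : (((strongProd G (⊤ : SimpleGraph (Fin (d + 1)))).adjMatrix ℝ)).IsHermitian)
    (Lam1 LamN : ℝ)
    (hLam1 : IsGreatest (Set.range hB.eigenvalues) Lam1)
    (hLamN : IsLeast (Set.range hB.eigenvalues) LamN) :
    (improperChromaticNumber (strongProd G (⊤ : SimpleGraph (Fin (d + 1)))) d : ℝ) =
        (Lam1 - LamN) / ((d : ℝ) - LamN) ∧
      improperChromaticNumber (strongProd G (⊤ : SimpleGraph (Fin (d + 1)))) d =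
        chromNum G :=
  stmt_10_general G hedge d hA lam1 lamn hlam1 hlamn hHoffman hB Lam1 LamN hLam1 hLamN
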